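/- For every m ∈ ℤ and n ∈ ℤ with n ≥ 1, the 2×2 matrix w_{m,n} = [[Dᵐaⁿ, Dᵐbⁿ],[Dᵐcⁿ, Dᵐdⁿ]] over A(DT²_q) is a unitary corepresentation: (i) Δ((w_{m,n})_{ik}) = Σ_{r} (w_{m,n})_{ir}⊗(w_{m,n})_{rk} for all i, k ∈ {1,2} (explicitly, Δ(Dᵐaⁿ) = Dᵐaⁿ⊗Dᵐaⁿ + Dᵐbⁿ⊗Dᵐcⁿ, and similarly for the other entries); (ii) ε((w_{m,n})_{ik}) = δ_{ik}; (iii) w_{m,n} is unitary: Σ_r ((w_{m,n})_{ri})*(w_{m,n})_{rk} = δ_{ik}·1 and Σ_r (w_{m,n})_{ir}((w_{m,n})_{kr})* = δ_{ik}·1. -/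

import Mathlib

open scoped TensorProduct
noncomputable section
namespace QDT

/-- generators a, b, c, d, D, D⁻¹ -/
inductive Gen : Type | a | b | c | d | D | Di

open FreeAlgebra in
/-- Defining relations of `A(U_{q⁻¹,q}(2))` (for `q ∈ U(1)`). -/
inductive URel (q : ℂ) : FreeAlgebra ℂ Gen → FreeAlgebra ℂ Gen → Prop
  | ab : URel q (ι ℂ Gen.a * ι ℂ Gen.b) (q⁻¹ • (ι ℂ Gen.b * ι ℂ Gen.a))
  | cd : URel q (ι ℂ Gen.c * ι ℂ Gen.d) (q⁻¹ • (ι ℂ Gen.d * ι ℂ Gen.c))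
  | ac : URel q (ι ℂ Gen.a * ι ℂ Gen.c) (q • (ι ℂ Gen.c * ι ℂ Gen.a))
  | bd : URel q (ι ℂ Gen.b * ι ℂ Gen.d) (q • (ι ℂ Gen.d * ι ℂ Gen.b))
  | ad : URel q (ι ℂ Gen.a * ι ℂ Gen.d) (ι ℂ Gen.d * ι ℂ Gen.a)
  | bc : URel q (ι ℂ Gen.b * ι ℂ Gen.c) ((q ^ 2) • (ι ℂ Gen.c * ι ℂ Gen.b))
  | DDi : URel q (ι ℂ Gen.D * ι ℂ Gen.Di) 1
  | DiD : URel q (ι ℂ Gen.Di * ι ℂ Gen.D) 1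
  | det : URel q (ι ℂ Gen.a * ι ℂ Gen.d - q⁻¹ • (ι ℂ Gen.b * ι ℂ Gen.c)) (ι ℂ Gen.D)

/-- The coordinate ring `A(U_{q⁻¹,q}(2))`, as the algebra presented by the above
generators and relations. -/
abbrev Uq (q : ℂ) : Type := RingQuot (URel q)

namespace Uq
variable (q : ℂ)
def a : Uq q := RingQuot.mkAlgHom ℂ (URel q) (FreeAlgebra.ι ℂ Gen.a)
def b : Uq q := RingQuot.mkAlgHom ℂ (URel q) (FreeAlgebra.ι ℂ Gen.b)
def c : Uq q := RingQuot.mkAlgHom ℂ (URel q) (FreeAlgebra.ι ℂ Gen.c)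
def d : Uq q := RingQuot.mkAlgHom ℂ (URel q) (FreeAlgebra.ι ℂ Gen.d)
def D : Uq q := RingQuot.mkAlgHom ℂ (URel q) (FreeAlgebra.ι ℂ Gen.D)
def Di : Uq q := RingQuot.mkAlgHom ℂ (URel q) (FreeAlgebra.ι ℂ Gen.Di)
/-- `z := D⁻¹ a d`. -/
def z : Uq q := Di q * (a q * d q)
/-- `D^k` for `k ∈ ℤ`. -/
def Dz (k : ℤ) : Uq q := if 0 ≤ k then (D q) ^ k.toNat else (Di q) ^ (-k).toNat
end Uq

/-- The relations `ab = 0, ac = 0, cd = 0, bd = 0`; dividing by them realizes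
the quotient of `A(U_{q⁻¹,q}(2))` by the two-sided ideal generated by `{ab, ac, cd, bd}`. -/
inductive DRel (q : ℂ) : Uq q → Uq q → Prop
  | ab : DRel q (Uq.a q * Uq.b q) 0
  | ac : DRel q (Uq.a q * Uq.c q) 0
  | cd : DRel q (Uq.c q * Uq.d q) 0
  | bd : DRel q (Uq.b q * Uq.d q) 0

/-- The coordinate ring `A(DT²_q)` of the quantum double-torus: the quotient of
`A(U_{q⁻¹,q}(2))` by the two-sided ideal generated by `{ab, ac, cd, bd}`. -/
abbrev ADT (q : ℂ) : Type := RingQuot (DRel q)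

namespace ADT
variable (q : ℂ)
/-- The canonical projection `A(U_{q⁻¹,q}(2)) → A(DT²_q)`. -/
def mk : Uq q →ₐ[ℂ] ADT q := RingQuot.mkAlgHom ℂ (DRel q)
def a : ADT q := mk q (Uq.a q)
def b : ADT q := mk q (Uq.b q)
def c : ADT q := mk q (Uq.c q)
def d : ADT q := mk q (Uq.d q)
def D : ADT q := mk q (Uq.D q)
def Di : ADT q := mk q (Uq.Di q)
/-- `z := D⁻¹ a d ∈ A(DT²_q)`. -/
def z : ADT q := Di q * (a q * d q)
/-- `D^m` for `m ∈ ℤ`. -/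
def Dz (m : ℤ) : ADT q := if 0 ≤ m then (D q) ^ m.toNat else (Di q) ^ (-m).toNat
end ADT

/- quantum torus -/
inductive TGen : Type | x | xi | y | yi

open FreeAlgebra in
/-- Defining relations of the quantum torus `A(T²_r)`:
`x x⁻¹ = x⁻¹ x = y y⁻¹ = y⁻¹ y = 1` and `xy = r yx`. -/
inductive TRel (r : ℂ) : FreeAlgebra ℂ TGen → FreeAlgebra ℂ TGen → Prop
  | xxi : TRel r (ι ℂ TGen.x * ι ℂ TGen.xi) 1
  | xix : TRel r (ι ℂ TGen.xi * ι ℂ TGen.x) 1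
  | yyi : TRel r (ι ℂ TGen.y * ι ℂ TGen.yi) 1
  | yiy : TRel r (ι ℂ TGen.yi * ι ℂ TGen.y) 1
  | xy : TRel r (ι ℂ TGen.x * ι ℂ TGen.y) (r • (ι ℂ TGen.y * ι ℂ TGen.x))

/-- The quantum torus algebra `A(T²_r)`.  For `r = 1` this is the Laurent polynomial
algebra `A(T²) = ℂ[u,u⁻¹,v,v⁻¹]` (we write `u := x`, `v := y`). -/
abbrev AT (r : ℂ) : Type := RingQuot (TRel r)

namespace AT
variable (r : ℂ)
def x : AT r := RingQuot.mkAlgHom ℂ (TRel r) (FreeAlgebra.ι ℂ TGen.x)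
def xi : AT r := RingQuot.mkAlgHom ℂ (TRel r) (FreeAlgebra.ι ℂ TGen.xi)
def y : AT r := RingQuot.mkAlgHom ℂ (TRel r) (FreeAlgebra.ι ℂ TGen.y)
def yi : AT r := RingQuot.mkAlgHom ℂ (TRel r) (FreeAlgebra.ι ℂ TGen.yi)
/-- `x^k` for `k ∈ ℤ`. -/
def xz (k : ℤ) : AT r := if 0 ≤ k then (x r) ^ k.toNat else (xi r) ^ (-k).toNat
/-- `y^l` for `l ∈ ℤ`. -/
def yz (l : ℤ) : AT r := if 0 ≤ l then (y r) ^ l.toNat else (yi r) ^ (-l).toNat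
/-- The monomial `x^k y^l` (i.e. `u^k v^l` when `r = 1`). -/
def uv (k l : ℤ) : AT r := xz r k * yz r l
end AT

/-- `A(T²)`, the Laurent polynomial algebra `ℂ[u,u⁻¹,v,v⁻¹]`, realized as the
quantum torus at `r = 1`; `u, v` are group-like. -/
abbrev AT2 : Type := AT 1
def AT2.u : AT2 := AT.x 1
def AT2.v : AT2 := AT.y 1

/-- `A(ℤ₂) = ℂ × ℂ`, the algebra of functions on `ℤ/2ℤ`. -/
abbrev AZ2 : Type := ℂ × ℂ
def AZ2.e0 : AZ2 := (1, 0)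
def AZ2.e1 : AZ2 := (0, 1)

/-- The value `j(u^k v^l)` of the cleaving map `j : A(T²) → A(DT²_q)`. -/
def jval (q : ℂ) (k l : ℤ) : ADT q :=
  if l < k then
    ADT.Dz q l * (ADT.a q ^ (k - l).toNat)
      + ((-1 : ℂ) ^ l * q ^ (l ^ 2)) • (ADT.Dz q l * (ADT.c q ^ (k - l).toNat))
  else if k = l then
    ADT.Dz q k * ADT.z q + ((-1 : ℂ) ^ k) • (ADT.Dz q (-k) * (1 - ADT.z q))
  else
    ((-1 : ℂ) ^ k * q ^ (-(k ^ 2))) • (ADT.Dz q k * (ADT.b q ^ (l - k).toNat))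
      + ADT.Dz q k * (ADT.d q ^ (l - k).toNat)

/-- The cocycle values `σ_q(k,l,m,n)`. -/
def sigmaq (q : ℂ) (k l m n : ℤ) : ℂ :=
  if l < k then
    (if n < m then q ^ (-(2 * k * n))
     else if m = n then q ^ (-(m * (2 * k + m)))
     else if l + n < k + m then q ^ (-(2 * n * (k + m)))
     else if k + m = l + n then q ^ ((k + m) * (2 * l - k - m))
     else q ^ (2 * l * (k + m)))
  else if k = l then
    (if n < m then q ^ (-(k * (k + 2 * n)))
     else if m = n then 1
     else q ^ (k * (k + 2 * m)))
  else
    (if n < m then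
      (if l + n < k + m then q ^ (-(2 * k * (l + n)))
       else if k + m = l + n then q ^ ((l + n) * (l + n - 2 * k))
       else q ^ (2 * m * (l + n)))
     else if m = n then q ^ (m * (m + 2 * l))
     else q ^ (2 * l * m))


/-! ### Hypothesis bundles: Hopf-algebra and `*`-structure data, characterized by
their values on the generators (these maps exist and are unique, cf. the paper). -/

/-- The Hopf structure of `A(U_{q⁻¹,q}(2))`: comultiplication, counit and antipode,
characterized by their values on the generators. -/
structure UqHopf (q : ℂ) where
  Δ : Uq q →ₐ[ℂ] Uq q ⊗[ℂ] Uq q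
  Δa : Δ (Uq.a q) = Uq.a q ⊗ₜ Uq.a q + Uq.b q ⊗ₜ Uq.c q
  Δb : Δ (Uq.b q) = Uq.a q ⊗ₜ Uq.b q + Uq.b q ⊗ₜ Uq.d q
  Δc : Δ (Uq.c q) = Uq.c q ⊗ₜ Uq.a q + Uq.d q ⊗ₜ Uq.c q
  Δd : Δ (Uq.d q) = Uq.c q ⊗ₜ Uq.b q + Uq.d q ⊗ₜ Uq.d q
  ΔD : Δ (Uq.D q) = Uq.D q ⊗ₜ Uq.D q
  ΔDi : Δ (Uq.Di q) = Uq.Di q ⊗ₜ Uq.Di q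
  ε : Uq q →ₐ[ℂ] ℂ
  εa : ε (Uq.a q) = 1
  εb : ε (Uq.b q) = 0
  εc : ε (Uq.c q) = 0
  εd : ε (Uq.d q) = 1
  εD : ε (Uq.D q) = 1
  εDi : ε (Uq.Di q) = 1
  S : Uq q →ₗ[ℂ] Uq q
  Sone : S 1 = 1
  Smul : ∀ p r : Uq q, S (p * r) = S r * S p
  Sa : S (Uq.a q) = Uq.Di q * Uq.d q
  Sb : S (Uq.b q) = -(q⁻¹ • (Uq.Di q * Uq.b q))
  Sc : S (Uq.c q) = -(q • (Uq.Di q * Uq.c q))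
  Sd : S (Uq.d q) = Uq.Di q * Uq.a q
  SD : S (Uq.D q) = Uq.Di q
  SDi : S (Uq.Di q) = Uq.D q

/-- The comultiplication and counit of `A(DT²_q)`, characterized by generator values. -/
structure ADTCoalg (q : ℂ) where
  Δ : ADT q →ₐ[ℂ] ADT q ⊗[ℂ] ADT q
  Δa : Δ (ADT.a q) = ADT.a q ⊗ₜ ADT.a q + ADT.b q ⊗ₜ ADT.c q
  Δb : Δ (ADT.b q) = ADT.a q ⊗ₜ ADT.b q + ADT.b q ⊗ₜ ADT.d q
  Δc : Δ (ADT.c q) = ADT.c q ⊗ₜ ADT.a q + ADT.d q ⊗ₜ ADT.c q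
  Δd : Δ (ADT.d q) = ADT.c q ⊗ₜ ADT.b q + ADT.d q ⊗ₜ ADT.d q
  ΔD : Δ (ADT.D q) = ADT.D q ⊗ₜ ADT.D q
  ΔDi : Δ (ADT.Di q) = ADT.Di q ⊗ₜ ADT.Di q
  ε : ADT q →ₐ[ℂ] ℂ
  εa : ε (ADT.a q) = 1
  εb : ε (ADT.b q) = 0
  εc : ε (ADT.c q) = 0
  εd : ε (ADT.d q) = 1
  εD : ε (ADT.D q) = 1
  εDi : ε (ADT.Di q) = 1

/-- The antipode of `A(DT²_q)`, a linear antimultiplicative map, characterized by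
its generator values. -/
structure ADTAntipode (q : ℂ) where
  S : ADT q →ₗ[ℂ] ADT q
  Sone : S 1 = 1
  Smul : ∀ p r : ADT q, S (p * r) = S r * S p
  Sa : S (ADT.a q) = ADT.Di q * ADT.d q
  Sb : S (ADT.b q) = -(q⁻¹ • (ADT.Di q * ADT.b q))
  Sc : S (ADT.c q) = -(q • (ADT.Di q * ADT.c q))
  Sd : S (ADT.d q) = ADT.Di q * ADT.a q
  SD : S (ADT.D q) = ADT.Di q
  SDi : S (ADT.Di q) = ADT.D q

/-- A `*`-structure (conjugate-linear antimultiplicative involution) on a ℂ-algebra. -/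
structure StarData (A : Type) [Ring A] [Algebra ℂ A] where
  st : A → A
  add : ∀ p r : A, st (p + r) = st p + st r
  smul : ∀ (c : ℂ) (p : A), st (c • p) = (starRingEnd ℂ c) • st p
  mul : ∀ p r : A, st (p * r) = st r * st p
  invol : ∀ p : A, st (st p) = p

/-- The `*`-structure of `A(DT²_q)`:
`a* = D⁻¹d`, `b* = −qD⁻¹c`, `c* = −q⁻¹D⁻¹b`, `d* = D⁻¹a`, `(D^{±1})* = D^{∓1}`. -/
structure ADTStar (q : ℂ) extends StarData (ADT q) where
  sta : st (ADT.a q) = ADT.Di q * ADT.d q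
  stb : st (ADT.b q) = -(q • (ADT.Di q * ADT.c q))
  stc : st (ADT.c q) = -(q⁻¹ • (ADT.Di q * ADT.b q))
  std : st (ADT.d q) = ADT.Di q * ADT.a q
  stD : st (ADT.D q) = ADT.Di q
  stDi : st (ADT.Di q) = ADT.D q

/-- The `*`-structure of the quantum torus: `x* = x⁻¹`, `y* = y⁻¹`. -/
structure ATStar (r : ℂ) extends StarData (AT r) where
  stx : st (AT.x r) = AT.xi r
  sty : st (AT.y r) = AT.yi r

/-- The Hopf algebra map `π : A(DT²_q) → A(T²)` "setting z = 1":
`π(a) = u`, `π(d) = v`, `π(b) = π(c) = 0`, `π(D^{±1}) = (uv)^{±1}`. -/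
structure PiMap (q : ℂ) where
  π : ADT q →ₐ[ℂ] AT2
  pa : π (ADT.a q) = AT2.u
  pb : π (ADT.b q) = 0
  pc : π (ADT.c q) = 0
  pd : π (ADT.d q) = AT2.v
  pD : π (ADT.D q) = AT2.u * AT2.v
  pDi : π (ADT.Di q) = AT.xi 1 * AT.yi 1

/-- The Hopf structure of `A(T²)`: `u`, `v` (and their inverses) are group-like. -/
structure AT2Coalg where
  Δ : AT2 →ₐ[ℂ] AT2 ⊗[ℂ] AT2
  Δu : Δ AT2.u = AT2.u ⊗ₜ AT2.u
  Δv : Δ AT2.v = AT2.v ⊗ₜ AT2.v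
  Δui : Δ (AT.xi 1) = AT.xi 1 ⊗ₜ AT.xi 1
  Δvi : Δ (AT.yi 1) = AT.yi 1 ⊗ₜ AT.yi 1
  ε : AT2 →ₐ[ℂ] ℂ
  εu : ε AT2.u = 1
  εv : ε AT2.v = 1
  εui : ε (AT.xi 1) = 1
  εvi : ε (AT.yi 1) = 1

/-- The Hopf structure of `A(ℤ₂)`. -/
structure Z2Hopf where
  Δ : AZ2 →ₐ[ℂ] AZ2 ⊗[ℂ] AZ2
  Δe0 : Δ AZ2.e0 = AZ2.e0 ⊗ₜ AZ2.e0 + AZ2.e1 ⊗ₜ AZ2.e1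
  Δe1 : Δ AZ2.e1 = AZ2.e0 ⊗ₜ AZ2.e1 + AZ2.e1 ⊗ₜ AZ2.e0
  ε : AZ2 →ₐ[ℂ] ℂ
  ε0 : ε AZ2.e0 = 1
  ε1 : ε AZ2.e1 = 0

/-- The Hopf algebra injection `i : A(ℤ₂) → A(DT²_q)`, `i(e₀) = z`, `i(e₁) = 1−z`. -/
structure IMap (q : ℂ) where
  i : AZ2 →ₐ[ℂ] ADT q
  ie0 : i AZ2.e0 = ADT.z q
  ie1 : i AZ2.e1 = 1 - ADT.z q

/-- The cleaving map `j : A(T²) → A(DT²_q)`, the linear map with `j(u^k v^l) = jval q k l`. -/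
structure JMap (q : ℂ) where
  j : AT2 →ₗ[ℂ] ADT q
  jv : ∀ k l : ℤ, j (AT.uv 1 k l) = jval q k l

/-- The convolution inverse `j⁻¹` of the cleaving map:
the linear map with `j⁻¹(u^k v^l) = (j(u^k v^l))⁻¹`. -/
structure JInvMap (q : ℂ) where
  jinv : AT2 →ₗ[ℂ] ADT q
  left : ∀ k l : ℤ, jinv (AT.uv 1 k l) * jval q k l = 1
  right : ∀ k l : ℤ, jval q k l * jinv (AT.uv 1 k l) = 1

/-- The Haar functional of `A(DT²_q)`: the linear functional vanishing on all
basis elements except `h(z) = h(1−z) = 1/2`. -/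
structure HaarData (q : ℂ) where
  h : ADT q →ₗ[ℂ] ℂ
  ha : ∀ (m : ℤ) (n : ℕ), 1 ≤ n → h (ADT.Dz q m * ADT.a q ^ n) = 0
  hb : ∀ (m : ℤ) (n : ℕ), 1 ≤ n → h (ADT.Dz q m * ADT.b q ^ n) = 0
  hc : ∀ (m : ℤ) (n : ℕ), 1 ≤ n → h (ADT.Dz q m * ADT.c q ^ n) = 0
  hd : ∀ (m : ℤ) (n : ℕ), 1 ≤ n → h (ADT.Dz q m * ADT.d q ^ n) = 0
  hz : ∀ m : ℤ, h (ADT.Dz q m * ADT.z q) = if m = 0 then 1/2 else 0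
  hoz : ∀ m : ℤ, h (ADT.Dz q m * (1 - ADT.z q)) = if m = 0 then 1/2 else 0

/-- `ℓ(p) = p₍₁₎ · j⁻¹(π(p₍₂₎))`, as a composite of linear maps. -/
def ellMap (q : ℂ) (Δ : ADT q →ₐ[ℂ] ADT q ⊗[ℂ] ADT q) (π : ADT q →ₐ[ℂ] AT2)
    (jinv : AT2 →ₗ[ℂ] ADT q) : ADT q →ₗ[ℂ] ADT q :=
  (LinearMap.mul' ℂ (ADT q)) ∘ₗ
    (TensorProduct.map LinearMap.id (jinv ∘ₗ π.toLinearMap)) ∘ₗ Δ.toLinearMap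


set_option linter.unusedSectionVars false

section helpers
variable {A : Type} [Ring A] [Algebra ℂ A]

lemma qcomm_one {t : ℂ} {x y : A} (h : y * x = t • (x * y)) :
    ∀ k : ℕ, y * x ^ k = t ^ k • (x ^ k * y) := by
  intro k
  induction k with
  | zero => simp
  | succ k ih =>
    rw [pow_succ, ← mul_assoc, ih, smul_mul_assoc, mul_assoc, h, pow_succ]
    simp [smul_smul, mul_assoc, mul_smul_comm]

lemma qcomm_pow {t : ℂ} {x y : A} (h : y * x = t • (x * y)) :
    ∀ j k : ℕ, y ^ j * x ^ k = t ^ (j * k) • (x ^ k * y ^ j) := by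
  intro j k
  induction j with
  | zero => simp
  | succ j ih =>
    rw [pow_succ, mul_assoc, qcomm_one h, mul_smul_comm, ← mul_assoc, ih,
      smul_mul_assoc, smul_smul, mul_assoc, ← pow_succ, ← pow_add]
    congr 2
    ring

lemma qcomm_mul_pow {t : ℂ} {x y : A} (h : y * x = t • (x * y)) :
    ∀ k : ℕ, (x * y) ^ k = t ^ (k.choose 2) • (x ^ k * y ^ k) := by
  intro k
  induction k with
  | zero => simp
  | succ k ih =>
    have hy : y ^ k * x = t ^ k • (x * y ^ k) := by
      simpa [mul_comm] using qcomm_pow h k 1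
    rw [pow_succ, ih, smul_mul_assoc, ← mul_assoc, mul_assoc (x^k) (y^k) x, hy]
    rw [mul_smul_comm, smul_mul_assoc, smul_smul]
    have hx : x ^ k * (x * y ^ k) * y = x ^ (k+1) * y ^ (k+1) := by
      simp [pow_succ, mul_assoc]
    rw [hx, ← pow_add]
    congr 2
    have h2 : (k+1).choose 2 = k + k.choose 2 := by
      rw [Nat.choose_succ_succ, Nat.choose_one_right]
    omega

end helpers

section helpers2
variable {A : Type} [Semiring A]

lemma orth_add_pow {x y : A} (hxy : x * y = 0) (hyx : y * x = 0) :
    ∀ k : ℕ, (x + y) ^ (k + 1) = x ^ (k + 1) + y ^ (k + 1) := by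
  intro k
  induction k with
  | zero => simp
  | succ k ih =>
    rw [pow_succ, ih, add_mul, mul_add, mul_add, pow_succ, pow_succ,
      mul_assoc _ x y, ← pow_succ, hxy, mul_zero, mul_assoc _ y x, hyx, mul_zero]
    simp [pow_succ, mul_assoc]

lemma orth_pow_mul_pow {x y : A} (hxy : x * y = 0) (j k : ℕ) :
    x ^ (j + 1) * y ^ (k + 1) = 0 := by
  rw [pow_succ, pow_succ', mul_assoc, ← mul_assoc x y, hxy, zero_mul, mul_zero]

end helpers2

section rels
variable {q : ℂ}

lemma U_ab : Uq.a q * Uq.b q = q⁻¹ • (Uq.b q * Uq.a q) := by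
  simpa only [Uq.a, Uq.b, map_mul, map_smul] using RingQuot.mkAlgHom_rel ℂ (URel.ab (q := q))
lemma U_cd : Uq.c q * Uq.d q = q⁻¹ • (Uq.d q * Uq.c q) := by
  simpa only [Uq.c, Uq.d, map_mul, map_smul] using RingQuot.mkAlgHom_rel ℂ (URel.cd (q := q))
lemma U_ac : Uq.a q * Uq.c q = q • (Uq.c q * Uq.a q) := by
  simpa only [Uq.a, Uq.c, map_mul, map_smul] using RingQuot.mkAlgHom_rel ℂ (URel.ac (q := q))
lemma U_bd : Uq.b q * Uq.d q = q • (Uq.d q * Uq.b q) := by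
  simpa only [Uq.b, Uq.d, map_mul, map_smul] using RingQuot.mkAlgHom_rel ℂ (URel.bd (q := q))
lemma U_ad : Uq.a q * Uq.d q = Uq.d q * Uq.a q := by
  simpa only [Uq.a, Uq.d, map_mul] using RingQuot.mkAlgHom_rel ℂ (URel.ad (q := q))
lemma U_bc : Uq.b q * Uq.c q = (q ^ 2) • (Uq.c q * Uq.b q) := by
  simpa only [Uq.b, Uq.c, map_mul, map_smul] using RingQuot.mkAlgHom_rel ℂ (URel.bc (q := q))
lemma U_DDi : Uq.D q * Uq.Di q = 1 := by
  simpa only [Uq.D, Uq.Di, map_mul, map_one] using RingQuot.mkAlgHom_rel ℂ (URel.DDi (q := q))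
lemma U_DiD : Uq.Di q * Uq.D q = 1 := by
  simpa only [Uq.D, Uq.Di, map_mul, map_one] using RingQuot.mkAlgHom_rel ℂ (URel.DiD (q := q))
lemma U_det : Uq.a q * Uq.d q - q⁻¹ • (Uq.b q * Uq.c q) = Uq.D q := by
  simpa only [Uq.a, Uq.b, Uq.c, Uq.d, Uq.D, map_mul, map_smul, map_sub]
    using RingQuot.mkAlgHom_rel ℂ (URel.det (q := q))

lemma Rab : ADT.a q * ADT.b q = 0 := by
  simpa only [ADT.a, ADT.b, ADT.mk, map_mul, map_zero]
    using RingQuot.mkAlgHom_rel ℂ (DRel.ab (q := q))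
lemma Rac : ADT.a q * ADT.c q = 0 := by
  simpa only [ADT.a, ADT.c, ADT.mk, map_mul, map_zero]
    using RingQuot.mkAlgHom_rel ℂ (DRel.ac (q := q))
lemma Rcd : ADT.c q * ADT.d q = 0 := by
  simpa only [ADT.c, ADT.d, ADT.mk, map_mul, map_zero]
    using RingQuot.mkAlgHom_rel ℂ (DRel.cd (q := q))
lemma Rbd : ADT.b q * ADT.d q = 0 := by
  simpa only [ADT.b, ADT.d, ADT.mk, map_mul, map_zero]
    using RingQuot.mkAlgHom_rel ℂ (DRel.bd (q := q))

lemma Rab' : ADT.a q * ADT.b q = q⁻¹ • (ADT.b q * ADT.a q) := by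
  simpa only [map_mul, map_smul, ADT.a, ADT.b] using congrArg (ADT.mk q) U_ab
lemma Rcd' : ADT.c q * ADT.d q = q⁻¹ • (ADT.d q * ADT.c q) := by
  simpa only [map_mul, map_smul, ADT.c, ADT.d] using congrArg (ADT.mk q) U_cd
lemma Rac' : ADT.a q * ADT.c q = q • (ADT.c q * ADT.a q) := by
  simpa only [map_mul, map_smul, ADT.a, ADT.c] using congrArg (ADT.mk q) U_ac
lemma Rbd' : ADT.b q * ADT.d q = q • (ADT.d q * ADT.b q) := by
  simpa only [map_mul, map_smul, ADT.b, ADT.d] using congrArg (ADT.mk q) U_bd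
lemma Rad : ADT.a q * ADT.d q = ADT.d q * ADT.a q := by
  simpa only [map_mul, ADT.a, ADT.d] using congrArg (ADT.mk q) U_ad
lemma Rbc : ADT.b q * ADT.c q = (q ^ 2) • (ADT.c q * ADT.b q) := by
  simpa only [map_mul, map_smul, ADT.b, ADT.c] using congrArg (ADT.mk q) U_bc
lemma RDDi : ADT.D q * ADT.Di q = 1 := by
  simpa only [map_mul, map_one, ADT.D, ADT.Di] using congrArg (ADT.mk q) U_DDi
lemma RDiD : ADT.Di q * ADT.D q = 1 := by
  simpa only [map_mul, map_one, ADT.D, ADT.Di] using congrArg (ADT.mk q) U_DiD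
lemma Rdet : ADT.a q * ADT.d q - q⁻¹ • (ADT.b q * ADT.c q) = ADT.D q := by
  simpa only [map_mul, map_smul, map_sub, ADT.a, ADT.b, ADT.c, ADT.d, ADT.D]
    using congrArg (ADT.mk q) U_det

lemma U_detAdd : Uq.a q * Uq.d q + (-q⁻¹) • (Uq.b q * Uq.c q) = Uq.D q := by
  have hns : (-q⁻¹ : ℂ) • (Uq.b q * Uq.c q) = -(q⁻¹ • (Uq.b q * Uq.c q)) := neg_smul (R := ℂ) (M := Uq q) _ _
  rw [hns, ← sub_eq_add_neg]; exact U_det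

lemma RdetAdd : ADT.a q * ADT.d q + (-q⁻¹) • (ADT.b q * ADT.c q) = ADT.D q := by
  simpa only [map_mul, map_smul, map_add, ADT.a, ADT.b, ADT.c, ADT.d, ADT.D]
    using congrArg (ADT.mk q) U_detAdd

variable (hq' : q ≠ 0)
include hq'

lemma Rba : ADT.b q * ADT.a q = 0 := by
  have h := Rab'.symm.trans (Rab (q := q))
  have h2 := congrArg (fun x => q • x) h
  simpa [smul_smul, mul_inv_cancel₀ hq'] using h2
lemma Rca : ADT.c q * ADT.a q = 0 := by
  have h := Rac'.symm.trans (Rac (q := q))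
  have h2 := congrArg (fun x => q⁻¹ • x) h
  simpa [smul_smul, inv_mul_cancel₀ hq'] using h2
lemma Rdc : ADT.d q * ADT.c q = 0 := by
  have h := Rcd'.symm.trans (Rcd (q := q))
  have h2 := congrArg (fun x => q • x) h
  simpa [smul_smul, mul_inv_cancel₀ hq'] using h2
lemma Rdb : ADT.d q * ADT.b q = 0 := by
  have h := Rbd'.symm.trans (Rbd (q := q))
  have h2 := congrArg (fun x => q⁻¹ • x) h
  simpa [smul_smul, inv_mul_cancel₀ hq'] using h2
lemma Rcb : ADT.c q * ADT.b q = (q ^ 2)⁻¹ • (ADT.b q * ADT.c q) := by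
  have h2 := congrArg (fun x => (q ^ 2)⁻¹ • x) (Rbc (q := q))
  simpa [smul_smul, inv_mul_cancel₀ (pow_ne_zero 2 hq')] using h2.symm

lemma RDa : ADT.D q * ADT.a q = ADT.a q * ADT.D q := by
  rw [← RdetAdd, add_mul, mul_add, smul_mul_assoc, mul_smul_comm,
    mul_assoc (ADT.b q), Rca hq', mul_zero, smul_zero, add_zero,
    ← mul_assoc (ADT.a q) (ADT.b q), Rab, zero_mul, smul_zero, add_zero,
    mul_assoc, ← Rad]

lemma RDd : ADT.D q * ADT.d q = ADT.d q * ADT.D q := by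
  rw [← RdetAdd, add_mul, mul_add, smul_mul_assoc, mul_smul_comm,
    mul_assoc (ADT.b q), Rcd, mul_zero, smul_zero, add_zero,
    ← mul_assoc (ADT.d q) (ADT.b q), Rdb hq', zero_mul, smul_zero, add_zero,
    ← mul_assoc, ← Rad]

lemma RDb : ADT.D q * ADT.b q = (q ^ 2)⁻¹ • (ADT.b q * ADT.D q) := by
  have h1 : ADT.D q * ADT.b q
      = (-q⁻¹ * (q ^ 2)⁻¹) • (ADT.b q * (ADT.b q * ADT.c q)) := by
    rw [← RdetAdd, add_mul, smul_mul_assoc, mul_assoc (ADT.a q), Rdb hq', mul_zero,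
      zero_add, mul_assoc (ADT.b q) (ADT.c q), Rcb hq', mul_smul_comm, smul_smul]
  have h2 : ADT.b q * ADT.D q = (-q⁻¹) • (ADT.b q * (ADT.b q * ADT.c q)) := by
    rw [← RdetAdd, mul_add, mul_smul_comm, ← mul_assoc (ADT.b q) (ADT.a q), Rba hq',
      zero_mul, zero_add]
  rw [h1, h2, smul_smul, mul_comm (-q⁻¹)]

lemma RDc : ADT.D q * ADT.c q = (q ^ 2) • (ADT.c q * ADT.D q) := by
  have h1 : ADT.D q * ADT.c q = (-q⁻¹) • (ADT.b q * (ADT.c q * ADT.c q)) := by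
    rw [← RdetAdd, add_mul, smul_mul_assoc, mul_assoc (ADT.a q), Rdc hq', mul_zero,
      zero_add, mul_assoc (ADT.b q)]
  have h2 : ADT.c q * ADT.D q
      = (-q⁻¹ * (q ^ 2)⁻¹) • (ADT.b q * (ADT.c q * ADT.c q)) := by
    rw [← RdetAdd, mul_add, mul_smul_comm, ← mul_assoc (ADT.c q) (ADT.a q), Rca hq',
      zero_mul, zero_add, ← mul_assoc (ADT.c q) (ADT.b q), Rcb hq', smul_mul_assoc,
      mul_assoc (ADT.b q), smul_smul]
  rw [h1, h2, smul_smul,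
    show q ^ 2 * (-q⁻¹ * (q ^ 2)⁻¹) = -q⁻¹ by field_simp]

lemma di_comm {t : ℂ} {x : ADT q} (h : ADT.D q * x = t • (x * ADT.D q)) :
    x * ADT.Di q = t • (ADT.Di q * x) := by
  have h1 : x * ADT.Di q = ADT.Di q * (ADT.D q * x) * ADT.Di q := by
    conv_rhs => rw [← mul_assoc (ADT.Di q) (ADT.D q) x, RDiD, one_mul]
  rw [h1, h, mul_smul_comm, smul_mul_assoc, mul_assoc, mul_assoc, RDDi, mul_one]

lemma RaDi : ADT.a q * ADT.Di q = ADT.Di q * ADT.a q := by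
  have := di_comm hq' (t := 1) (x := ADT.a q) (by rw [one_smul, RDa hq'])
  simpa using this
lemma RdDi : ADT.d q * ADT.Di q = ADT.Di q * ADT.d q := by
  have := di_comm hq' (t := 1) (x := ADT.d q) (by rw [one_smul, RDd hq'])
  simpa using this
lemma RbDi : ADT.b q * ADT.Di q = (q ^ 2)⁻¹ • (ADT.Di q * ADT.b q) :=
  di_comm hq' (RDb hq')
lemma RcDi : ADT.c q * ADT.Di q = (q ^ 2) • (ADT.Di q * ADT.c q) :=
  di_comm hq' (RDc hq')

omit hq'

lemma CDiD : Commute (ADT.Di q) (ADT.D q) := RDiD.trans RDDi.symm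
lemma Cad : Commute (ADT.a q) (ADT.d q) := Rad

lemma RDinDn (k : ℕ) : ADT.Di q ^ k * ADT.D q ^ k = 1 := by
  rw [← (CDiD (q := q)).mul_pow, RDiD, one_pow]
lemma RDnDin (k : ℕ) : ADT.D q ^ k * ADT.Di q ^ k = 1 := by
  rw [← (CDiD (q := q)).symm.mul_pow, RDDi, one_pow]

lemma RDzDz (m : ℤ) : ADT.Dz q m * ADT.Dz q (-m) = 1 := by
  unfold ADT.Dz
  rcases lt_trichotomy m 0 with h | h | h
  · rw [if_neg (by omega), if_pos (by omega), RDinDn]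
  · subst h; simp
  · rw [if_pos (by omega), if_neg (by omega), neg_neg, RDnDin]

lemma RDzDz' (m : ℤ) : ADT.Dz q (-m) * ADT.Dz q m = 1 := by
  have := RDzDz (q := q) (-m)
  rwa [neg_neg] at this

lemma sandwich (m : ℤ) (u v : ADT q) :
    (u * ADT.Dz q (-m)) * (ADT.Dz q m * v) = u * v := by
  rw [mul_assoc, ← mul_assoc (ADT.Dz q (-m)), RDzDz', one_mul]

end rels

section star
variable {q : ℂ} (st : ADTStar q)

lemma st_one : st.st 1 = 1 := by
  have h : ∀ y : ADT q, st.st y = st.st 1 * st.st y := by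
    intro y
    conv_lhs => rw [← mul_one y, st.mul]
  have h2 := h (st.st 1)
  rw [st.invol, mul_one] at h2
  exact h2.symm

lemma st_pow (x : ADT q) (k : ℕ) : st.st (x ^ k) = st.st x ^ k := by
  induction k with
  | zero => simpa using st_one st
  | succ k ih => rw [pow_succ', st.mul, ih, ← pow_succ]

lemma st_Dz (m : ℤ) : st.st (ADT.Dz q m) = ADT.Dz q (-m) := by
  unfold ADT.Dz
  rcases lt_trichotomy m 0 with h | h | h
  · rw [if_neg (by omega), if_pos (by omega), st_pow, st.stDi]
  · subst h; simpa using st_one st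
  · rw [if_pos (by omega), if_neg (by omega), neg_neg, st_pow, st.stD]

end star

/-- The matrix `w_{m,n} = [[D^m a^n, D^m b^n], [D^m c^n, D^m d^n]]` over `A(DT²_q)`. -/
def wmat (q : ℂ) (m : ℤ) (n : ℕ) : Matrix (Fin 2) (Fin 2) (ADT q) :=
  !![ADT.Dz q m * ADT.a q ^ n, ADT.Dz q m * ADT.b q ^ n;
     ADT.Dz q m * ADT.c q ^ n, ADT.Dz q m * ADT.d q ^ n]


section key
variable {q : ℂ} (hq' : q ≠ 0)
include hq'

lemma key_det (n : ℕ) :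
    ADT.Di q ^ (n+1) * ((ADT.a q * ADT.d q) ^ (n+1)
      + ((-q⁻¹) • (ADT.b q * ADT.c q)) ^ (n+1)) = 1 := by
  have hxy : (ADT.a q * ADT.d q) * ((-q⁻¹) • (ADT.b q * ADT.c q)) = 0 := by
    rw [mul_smul_comm, mul_assoc, ← mul_assoc (ADT.d q), Rdb hq', zero_mul, mul_zero,
      smul_zero]
  have hyx : ((-q⁻¹) • (ADT.b q * ADT.c q)) * (ADT.a q * ADT.d q) = 0 := by
    rw [smul_mul_assoc, mul_assoc, ← mul_assoc (ADT.c q), Rca hq', zero_mul, mul_zero,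
      smul_zero]
  have h2 := orth_add_pow (A := ADT q) hxy hyx n
  rw [← h2, RdetAdd, RDinDn]

end key


section main
variable {q : ℂ} (hq' : q ≠ 0)
include hq'

lemma CdDi : Commute (ADT.Di q) (ADT.d q) := (RdDi hq').symm
lemma CaDi : Commute (ADT.a q) (ADT.Di q) := RaDi hq'
lemma CDia : Commute (ADT.Di q) (ADT.a q) := (RaDi hq').symm

lemma nat_sq (N : ℕ) : N * N = 2 * N.choose 2 + N := by
  induction N with
  | zero => rfl
  | succ k ih =>
    rw [Nat.choose_succ_succ, Nat.choose_one_right]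
    ring_nf
    ring_nf at ih
    omega

lemma P4 (N : ℕ) : ADT.b q ^ N * ADT.c q ^ N
    = ((q ^ 2 : ℂ) ^ N.choose 2) • (ADT.b q * ADT.c q) ^ N := by
  rw [qcomm_mul_pow (A := ADT q) (Rcb hq') N, smul_smul, ← mul_pow,
    mul_inv_cancel₀ (pow_ne_zero 2 hq'), one_pow, one_smul]

lemma P5 (N : ℕ) : ADT.c q ^ N * ADT.b q ^ N
    = (((q ^ 2 : ℂ)⁻¹) ^ N.choose 2 * ((q ^ 2 : ℂ)⁻¹) ^ N) • (ADT.b q * ADT.c q) ^ N := by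
  have h := qcomm_mul_pow (A := ADT q) (Rbc (q := q)) N
  have h2 : (ADT.c q * ADT.b q) ^ N = ((q ^ 2 : ℂ)⁻¹) ^ N • (ADT.b q * ADT.c q) ^ N := by
    rw [Rcb hq', smul_pow]
  rw [h2] at h
  have h3 := congrArg (fun z => ((q ^ 2 : ℂ)⁻¹) ^ N.choose 2 • z) h
  simp only [smul_smul] at h3
  rw [← mul_pow, inv_mul_cancel₀ (pow_ne_zero 2 hq'), one_pow, one_smul] at h3
  exact h3.symm

variable (st : ADTStar q)

lemma stb' : st.st (ADT.b q) = (-q) • (ADT.Di q * ADT.c q) := by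
  rw [st.stb]
  exact (neg_smul (R := ℂ) (M := ADT q) _ _).symm

lemma stc' : st.st (ADT.c q) = (-q⁻¹) • (ADT.Di q * ADT.b q) := by
  rw [st.stc]
  exact (neg_smul (R := ℂ) (M := ADT q) _ _).symm

lemma U_aa (m : ℤ) (n : ℕ) :
    st.st (ADT.Dz q m * ADT.a q ^ (n+1)) * (ADT.Dz q m * ADT.a q ^ (n+1))
      + st.st (ADT.Dz q m * ADT.c q ^ (n+1)) * (ADT.Dz q m * ADT.c q ^ (n+1)) = 1 := by
  rw [st.mul, st_pow, st.sta, st_Dz, st.mul, st_pow, stc' hq' st, st_Dz,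
    sandwich, sandwich, smul_pow, smul_mul_assoc,
    qcomm_mul_pow (A := ADT q) (RbDi hq') (n+1), smul_mul_assoc, mul_assoc, P4 hq' (n+1),
    mul_smul_comm, smul_smul, smul_smul,
    show ((-q⁻¹ : ℂ)) ^ (n+1) * ((q ^ 2 : ℂ)⁻¹) ^ ((n+1).choose 2)
        * ((q ^ 2 : ℂ)) ^ ((n+1).choose 2) = (-q⁻¹ : ℂ) ^ (n+1) by
      rw [mul_assoc, ← mul_pow, inv_mul_cancel₀ (pow_ne_zero 2 hq'), one_pow, mul_one],
    Commute.mul_pow ((RdDi hq').symm), mul_assoc,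
    ((Cad (q := q)).symm.pow_pow (n+1) (n+1)).eq, ← (Cad (q := q)).mul_pow]
  have hk := key_det hq' n
  rw [mul_add, smul_pow, mul_smul_comm] at hk
  exact hk

lemma cancel_pow (a : ℕ) : ((q ^ 2 : ℂ)) ^ a * ((q ^ 2 : ℂ)⁻¹) ^ a = 1 := by
  rw [← mul_pow, mul_inv_cancel₀ (pow_ne_zero 2 hq'), one_pow]

lemma negq_mul : (-q : ℂ) * (q ^ 2 : ℂ)⁻¹ = -q⁻¹ := by
  field_simp

lemma negqi_mul : (-q⁻¹ : ℂ) * ((q ^ 2 : ℂ) * (q ^ 2 : ℂ)⁻¹) = -q⁻¹ := by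
  rw [mul_inv_cancel₀ (pow_ne_zero 2 hq'), mul_one]

lemma key2 (n : ℕ) :
    ADT.Di q ^ (n+1) * (ADT.a q * ADT.d q) ^ (n+1)
      + ((-q⁻¹ : ℂ)) ^ (n+1) • (ADT.Di q ^ (n+1) * (ADT.b q * ADT.c q) ^ (n+1)) = 1 := by
  have hk := key_det hq' n
  rw [mul_add, smul_pow, mul_smul_comm] at hk
  exact hk

lemma key2' (n : ℕ) :
    ((-q⁻¹ : ℂ)) ^ (n+1) • (ADT.Di q ^ (n+1) * (ADT.b q * ADT.c q) ^ (n+1))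
      + ADT.Di q ^ (n+1) * (ADT.a q * ADT.d q) ^ (n+1) = 1 := by
  rw [add_comm]; exact key2 hq' n

lemma U_bb (m : ℤ) (n : ℕ) :
    st.st (ADT.Dz q m * ADT.b q ^ (n+1)) * (ADT.Dz q m * ADT.b q ^ (n+1))
      + st.st (ADT.Dz q m * ADT.d q ^ (n+1)) * (ADT.Dz q m * ADT.d q ^ (n+1)) = 1 := by
  rw [st.mul, st_pow, stb' hq' st, st_Dz, st.mul, st_pow, st.std, st_Dz,
    sandwich, sandwich, smul_pow, smul_mul_assoc,
    qcomm_mul_pow (A := ADT q) (RcDi hq') (n+1), smul_mul_assoc, mul_assoc,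
    P5 hq' (n+1), mul_smul_comm, smul_smul, smul_smul,
    Commute.mul_pow (CDia hq'), mul_assoc (ADT.Di q ^ (n+1)), ← (Cad (q := q)).mul_pow,
    show ((-q : ℂ)) ^ (n+1) * ((q ^ 2 : ℂ)) ^ ((n+1).choose 2)
        * (((q ^ 2 : ℂ)⁻¹) ^ ((n+1).choose 2) * ((q ^ 2 : ℂ)⁻¹) ^ (n+1))
        = (-q⁻¹ : ℂ) ^ (n+1) by
      calc ((-q : ℂ)) ^ (n+1) * ((q ^ 2 : ℂ)) ^ ((n+1).choose 2)
          * (((q ^ 2 : ℂ)⁻¹) ^ ((n+1).choose 2) * ((q ^ 2 : ℂ)⁻¹) ^ (n+1))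
          = ((q ^ 2 : ℂ)) ^ ((n+1).choose 2) * ((q ^ 2 : ℂ)⁻¹) ^ ((n+1).choose 2)
            * ((-q : ℂ) ^ (n+1) * ((q ^ 2 : ℂ)⁻¹) ^ (n+1)) := by ring
        _ = (-q⁻¹ : ℂ) ^ (n+1) := by
            rw [cancel_pow hq', one_mul, ← mul_pow, negq_mul hq']]
  exact key2' hq' n

lemma U_offab (m : ℤ) (n : ℕ) :
    st.st (ADT.Dz q m * ADT.a q ^ (n+1)) * (ADT.Dz q m * ADT.b q ^ (n+1))
      + st.st (ADT.Dz q m * ADT.c q ^ (n+1)) * (ADT.Dz q m * ADT.d q ^ (n+1)) = 0 := by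
  rw [st.mul, st_pow, st.sta, st_Dz, st.mul, st_pow, stc' hq' st, st_Dz,
    sandwich, sandwich, smul_pow, smul_mul_assoc,
    qcomm_mul_pow (A := ADT q) (RbDi hq') (n+1), smul_mul_assoc, mul_assoc,
    orth_pow_mul_pow (A := ADT q) (Rbd (q := q)) n n, mul_zero, smul_zero, smul_zero,
    Commute.mul_pow ((RdDi hq').symm), mul_assoc,
    orth_pow_mul_pow (A := ADT q) (Rdb hq') n n, mul_zero, add_zero]

lemma U_offba (m : ℤ) (n : ℕ) :
    st.st (ADT.Dz q m * ADT.b q ^ (n+1)) * (ADT.Dz q m * ADT.a q ^ (n+1))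
      + st.st (ADT.Dz q m * ADT.d q ^ (n+1)) * (ADT.Dz q m * ADT.c q ^ (n+1)) = 0 := by
  rw [st.mul, st_pow, stb' hq' st, st_Dz, st.mul, st_pow, st.std, st_Dz,
    sandwich, sandwich, smul_pow, smul_mul_assoc,
    qcomm_mul_pow (A := ADT q) (RcDi hq') (n+1), smul_mul_assoc, mul_assoc,
    orth_pow_mul_pow (A := ADT q) (Rca hq') n n, mul_zero, smul_zero, smul_zero,
    Commute.mul_pow (CDia hq'), mul_assoc,
    orth_pow_mul_pow (A := ADT q) (Rac (q := q)) n n, mul_zero, add_zero]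

omit hq' in
lemma sandwich2 (m : ℤ) (u v : ADT q) :
    (ADT.Dz q m * u) * (v * ADT.Dz q (-m)) = ADT.Dz q m * (u * v) * ADT.Dz q (-m) := by
  rw [mul_assoc, ← mul_assoc u v, ← mul_assoc]

lemma V_aa (m : ℤ) (n : ℕ) :
    (ADT.Dz q m * ADT.a q ^ (n+1)) * st.st (ADT.Dz q m * ADT.a q ^ (n+1))
      + (ADT.Dz q m * ADT.b q ^ (n+1)) * st.st (ADT.Dz q m * ADT.b q ^ (n+1)) = 1 := by
  rw [st.mul, st_pow, st.sta, st_Dz, st.mul, st_pow, stb' hq' st, st_Dz,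
    sandwich2, sandwich2, Commute.mul_pow ((RdDi hq').symm),
    ← mul_assoc (ADT.a q ^ (n+1)), ((CaDi hq').pow_pow (n+1) (n+1)).eq,
    mul_assoc (ADT.Di q ^ (n+1)), ← (Cad (q := q)).mul_pow,
    smul_pow, qcomm_mul_pow (A := ADT q) (RcDi hq') (n+1)]
  simp only [mul_smul_comm, smul_mul_assoc, smul_smul]
  rw [← mul_assoc (ADT.b q ^ (n+1)), qcomm_pow (A := ADT q) (RbDi hq') (n+1) (n+1)]
  simp only [mul_smul_comm, smul_mul_assoc, smul_smul]
  rw [mul_assoc (ADT.Di q ^ (n+1)), P4 hq' (n+1)]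
  simp only [mul_smul_comm, smul_mul_assoc, smul_smul]
  rw [show ((-q : ℂ)) ^ (n+1) * ((q ^ 2 : ℂ)) ^ ((n+1).choose 2)
        * ((q ^ 2 : ℂ)⁻¹) ^ ((n+1) * (n+1)) * ((q ^ 2 : ℂ)) ^ ((n+1).choose 2)
        = (-q⁻¹ : ℂ) ^ (n+1) by
      rw [show (n+1) * (n+1) = (n+1).choose 2 + ((n+1).choose 2 + (n+1)) from by
          have := nat_sq hq' (n+1); omega,
        pow_add ((q ^ 2 : ℂ)⁻¹) ((n+1).choose 2) ((n+1).choose 2 + (n+1)),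
        pow_add ((q ^ 2 : ℂ)⁻¹) ((n+1).choose 2) (n+1)]
      calc ((-q : ℂ)) ^ (n+1) * ((q ^ 2 : ℂ)) ^ ((n+1).choose 2)
          * (((q ^ 2 : ℂ)⁻¹) ^ ((n+1).choose 2)
            * (((q ^ 2 : ℂ)⁻¹) ^ ((n+1).choose 2) * ((q ^ 2 : ℂ)⁻¹) ^ (n+1)))
          * ((q ^ 2 : ℂ)) ^ ((n+1).choose 2)
          = ((q ^ 2 : ℂ)) ^ ((n+1).choose 2) * ((q ^ 2 : ℂ)⁻¹) ^ ((n+1).choose 2)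
            * (((q ^ 2 : ℂ)) ^ ((n+1).choose 2) * ((q ^ 2 : ℂ)⁻¹) ^ ((n+1).choose 2))
            * ((-q : ℂ) ^ (n+1) * ((q ^ 2 : ℂ)⁻¹) ^ (n+1)) := by ring
        _ = (-q⁻¹ : ℂ) ^ (n+1) := by
            rw [cancel_pow hq', one_mul, one_mul, ← mul_pow, negq_mul hq'],
    ← smul_mul_assoc, ← mul_smul_comm, ← add_mul, ← mul_add, key2 hq' n, mul_one, RDzDz]

lemma V_bb (m : ℤ) (n : ℕ) :
    (ADT.Dz q m * ADT.c q ^ (n+1)) * st.st (ADT.Dz q m * ADT.c q ^ (n+1))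
      + (ADT.Dz q m * ADT.d q ^ (n+1)) * st.st (ADT.Dz q m * ADT.d q ^ (n+1)) = 1 := by
  rw [st.mul, st_pow, stc' hq' st, st_Dz, st.mul, st_pow, st.std, st_Dz,
    sandwich2, sandwich2, Commute.mul_pow (CDia hq'),
    ← mul_assoc (ADT.d q ^ (n+1)), ((CdDi hq').symm.pow_pow (n+1) (n+1)).eq,
    mul_assoc (ADT.Di q ^ (n+1)), ((Cad (q := q)).symm.pow_pow (n+1) (n+1)).eq,
    ← (Cad (q := q)).mul_pow,
    smul_pow, qcomm_mul_pow (A := ADT q) (RbDi hq') (n+1)]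
  simp only [mul_smul_comm, smul_mul_assoc, smul_smul]
  rw [← mul_assoc (ADT.c q ^ (n+1)), qcomm_pow (A := ADT q) (RcDi hq') (n+1) (n+1)]
  simp only [mul_smul_comm, smul_mul_assoc, smul_smul]
  rw [mul_assoc (ADT.Di q ^ (n+1)), P5 hq' (n+1)]
  simp only [mul_smul_comm, smul_mul_assoc, smul_smul]
  rw [show ((-q⁻¹ : ℂ)) ^ (n+1) * ((q ^ 2 : ℂ)⁻¹) ^ ((n+1).choose 2)
        * ((q ^ 2 : ℂ)) ^ ((n+1) * (n+1))
        * (((q ^ 2 : ℂ)⁻¹) ^ ((n+1).choose 2) * ((q ^ 2 : ℂ)⁻¹) ^ (n+1))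
        = (-q⁻¹ : ℂ) ^ (n+1) by
      rw [show (n+1) * (n+1) = (n+1).choose 2 + ((n+1).choose 2 + (n+1)) from by
          have := nat_sq hq' (n+1); omega,
        pow_add ((q ^ 2 : ℂ)) ((n+1).choose 2) ((n+1).choose 2 + (n+1)),
        pow_add ((q ^ 2 : ℂ)) ((n+1).choose 2) (n+1)]
      calc ((-q⁻¹ : ℂ)) ^ (n+1) * ((q ^ 2 : ℂ)⁻¹) ^ ((n+1).choose 2)
          * (((q ^ 2 : ℂ)) ^ ((n+1).choose 2)
            * (((q ^ 2 : ℂ)) ^ ((n+1).choose 2) * ((q ^ 2 : ℂ)) ^ (n+1)))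
          * (((q ^ 2 : ℂ)⁻¹) ^ ((n+1).choose 2) * ((q ^ 2 : ℂ)⁻¹) ^ (n+1))
          = ((q ^ 2 : ℂ)) ^ ((n+1).choose 2) * ((q ^ 2 : ℂ)⁻¹) ^ ((n+1).choose 2)
            * (((q ^ 2 : ℂ)) ^ ((n+1).choose 2) * ((q ^ 2 : ℂ)⁻¹) ^ ((n+1).choose 2))
            * (((q ^ 2 : ℂ)) ^ (n+1) * ((q ^ 2 : ℂ)⁻¹) ^ (n+1))
            * ((-q⁻¹ : ℂ)) ^ (n+1) := by ring
        _ = (-q⁻¹ : ℂ) ^ (n+1) := by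
            rw [cancel_pow hq', cancel_pow hq', one_mul, one_mul, one_mul],
    ← smul_mul_assoc, ← mul_smul_comm, ← add_mul, ← mul_add, key2' hq' n, mul_one, RDzDz]

lemma V_offab (m : ℤ) (n : ℕ) :
    (ADT.Dz q m * ADT.a q ^ (n+1)) * st.st (ADT.Dz q m * ADT.c q ^ (n+1))
      + (ADT.Dz q m * ADT.b q ^ (n+1)) * st.st (ADT.Dz q m * ADT.d q ^ (n+1)) = 0 := by
  rw [st.mul, st_pow, stc' hq' st, st_Dz, st.mul, st_pow, st.std, st_Dz,
    sandwich2, sandwich2, smul_pow, qcomm_mul_pow (A := ADT q) (RbDi hq') (n+1)]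
  simp only [mul_smul_comm, smul_mul_assoc, smul_smul]
  rw [← mul_assoc (ADT.a q ^ (n+1)), ((CaDi hq').pow_pow (n+1) (n+1)).eq,
    mul_assoc (ADT.Di q ^ (n+1)), orth_pow_mul_pow (A := ADT q) (Rab (q := q)) n n,
    mul_zero, mul_zero, zero_mul, smul_zero,
    Commute.mul_pow (CDia hq'), ← mul_assoc (ADT.b q ^ (n+1)),
    qcomm_pow (A := ADT q) (RbDi hq') (n+1) (n+1)]
  simp only [mul_smul_comm, smul_mul_assoc, smul_smul]
  rw [mul_assoc (ADT.Di q ^ (n+1)), orth_pow_mul_pow (A := ADT q) (Rba hq') n n,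
    mul_zero, mul_zero, zero_mul, smul_zero, add_zero]

lemma V_offba (m : ℤ) (n : ℕ) :
    (ADT.Dz q m * ADT.c q ^ (n+1)) * st.st (ADT.Dz q m * ADT.a q ^ (n+1))
      + (ADT.Dz q m * ADT.d q ^ (n+1)) * st.st (ADT.Dz q m * ADT.b q ^ (n+1)) = 0 := by
  rw [st.mul, st_pow, st.sta, st_Dz, st.mul, st_pow, stb' hq' st, st_Dz,
    sandwich2, sandwich2, Commute.mul_pow ((RdDi hq').symm),
    ← mul_assoc (ADT.c q ^ (n+1)), qcomm_pow (A := ADT q) (RcDi hq') (n+1) (n+1)]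
  simp only [mul_smul_comm, smul_mul_assoc, smul_smul]
  rw [mul_assoc (ADT.Di q ^ (n+1)), orth_pow_mul_pow (A := ADT q) (Rcd (q := q)) n n,
    mul_zero, mul_zero, zero_mul, smul_zero, zero_add,
    smul_pow, qcomm_mul_pow (A := ADT q) (RcDi hq') (n+1)]
  simp only [mul_smul_comm, smul_mul_assoc, smul_smul]
  rw [← mul_assoc (ADT.d q ^ (n+1)), ((CdDi hq').symm.pow_pow (n+1) (n+1)).eq,
    mul_assoc (ADT.Di q ^ (n+1)), orth_pow_mul_pow (A := ADT q) (Rdc hq') n n,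
    mul_zero, mul_zero, zero_mul, smul_zero]

end main


section coalg
variable {q : ℂ} (hq' : q ≠ 0) (Cq : ADTCoalg q)

lemma ΔDz (m : ℤ) : Cq.Δ (ADT.Dz q m) = ADT.Dz q m ⊗ₜ[ℂ] ADT.Dz q m := by
  unfold ADT.Dz
  split_ifs
  · rw [map_pow, Cq.ΔD, Algebra.TensorProduct.tmul_pow]
  · rw [map_pow, Cq.ΔDi, Algebra.TensorProduct.tmul_pow]

lemma epsDz (m : ℤ) : Cq.ε (ADT.Dz q m) = 1 := by
  unfold ADT.Dz
  split_ifs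
  · rw [map_pow, Cq.εD, one_pow]
  · rw [map_pow, Cq.εDi, one_pow]

include hq'

lemma D00 (m : ℤ) (n : ℕ) : Cq.Δ (ADT.Dz q m * ADT.a q ^ (n+1))
    = (ADT.Dz q m * ADT.a q ^ (n+1)) ⊗ₜ[ℂ] (ADT.Dz q m * ADT.a q ^ (n+1))
      + (ADT.Dz q m * ADT.b q ^ (n+1)) ⊗ₜ[ℂ] (ADT.Dz q m * ADT.c q ^ (n+1)) := by
  rw [map_mul, map_pow, ΔDz Cq, Cq.Δa]
  have hxy : (ADT.a q ⊗ₜ[ℂ] ADT.a q) * (ADT.b q ⊗ₜ[ℂ] ADT.c q) = 0 := by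
    rw [Algebra.TensorProduct.tmul_mul_tmul, Rab, TensorProduct.zero_tmul]
  have hyx : (ADT.b q ⊗ₜ[ℂ] ADT.c q) * (ADT.a q ⊗ₜ[ℂ] ADT.a q) = 0 := by
    rw [Algebra.TensorProduct.tmul_mul_tmul, Rba hq', TensorProduct.zero_tmul]
  rw [orth_add_pow (A := ADT q ⊗[ℂ] ADT q) hxy hyx n, Algebra.TensorProduct.tmul_pow,
    Algebra.TensorProduct.tmul_pow, mul_add, Algebra.TensorProduct.tmul_mul_tmul,
    Algebra.TensorProduct.tmul_mul_tmul]

lemma D01 (m : ℤ) (n : ℕ) : Cq.Δ (ADT.Dz q m * ADT.b q ^ (n+1))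
    = (ADT.Dz q m * ADT.a q ^ (n+1)) ⊗ₜ[ℂ] (ADT.Dz q m * ADT.b q ^ (n+1))
      + (ADT.Dz q m * ADT.b q ^ (n+1)) ⊗ₜ[ℂ] (ADT.Dz q m * ADT.d q ^ (n+1)) := by
  rw [map_mul, map_pow, ΔDz Cq, Cq.Δb]
  have hxy : (ADT.a q ⊗ₜ[ℂ] ADT.b q) * (ADT.b q ⊗ₜ[ℂ] ADT.d q) = 0 := by
    rw [Algebra.TensorProduct.tmul_mul_tmul, Rab, TensorProduct.zero_tmul]
  have hyx : (ADT.b q ⊗ₜ[ℂ] ADT.d q) * (ADT.a q ⊗ₜ[ℂ] ADT.b q) = 0 := by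
    rw [Algebra.TensorProduct.tmul_mul_tmul, Rba hq', TensorProduct.zero_tmul]
  rw [orth_add_pow (A := ADT q ⊗[ℂ] ADT q) hxy hyx n, Algebra.TensorProduct.tmul_pow,
    Algebra.TensorProduct.tmul_pow, mul_add, Algebra.TensorProduct.tmul_mul_tmul,
    Algebra.TensorProduct.tmul_mul_tmul]

lemma D10 (m : ℤ) (n : ℕ) : Cq.Δ (ADT.Dz q m * ADT.c q ^ (n+1))
    = (ADT.Dz q m * ADT.c q ^ (n+1)) ⊗ₜ[ℂ] (ADT.Dz q m * ADT.a q ^ (n+1))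
      + (ADT.Dz q m * ADT.d q ^ (n+1)) ⊗ₜ[ℂ] (ADT.Dz q m * ADT.c q ^ (n+1)) := by
  rw [map_mul, map_pow, ΔDz Cq, Cq.Δc]
  have hxy : (ADT.c q ⊗ₜ[ℂ] ADT.a q) * (ADT.d q ⊗ₜ[ℂ] ADT.c q) = 0 := by
    rw [Algebra.TensorProduct.tmul_mul_tmul, Rcd, TensorProduct.zero_tmul]
  have hyx : (ADT.d q ⊗ₜ[ℂ] ADT.c q) * (ADT.c q ⊗ₜ[ℂ] ADT.a q) = 0 := by
    rw [Algebra.TensorProduct.tmul_mul_tmul, Rdc hq', TensorProduct.zero_tmul]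
  rw [orth_add_pow (A := ADT q ⊗[ℂ] ADT q) hxy hyx n, Algebra.TensorProduct.tmul_pow,
    Algebra.TensorProduct.tmul_pow, mul_add, Algebra.TensorProduct.tmul_mul_tmul,
    Algebra.TensorProduct.tmul_mul_tmul]

lemma D11 (m : ℤ) (n : ℕ) : Cq.Δ (ADT.Dz q m * ADT.d q ^ (n+1))
    = (ADT.Dz q m * ADT.c q ^ (n+1)) ⊗ₜ[ℂ] (ADT.Dz q m * ADT.b q ^ (n+1))
      + (ADT.Dz q m * ADT.d q ^ (n+1)) ⊗ₜ[ℂ] (ADT.Dz q m * ADT.d q ^ (n+1)) := by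
  rw [map_mul, map_pow, ΔDz Cq, Cq.Δd]
  have hxy : (ADT.c q ⊗ₜ[ℂ] ADT.b q) * (ADT.d q ⊗ₜ[ℂ] ADT.d q) = 0 := by
    rw [Algebra.TensorProduct.tmul_mul_tmul, Rcd, TensorProduct.zero_tmul]
  have hyx : (ADT.d q ⊗ₜ[ℂ] ADT.d q) * (ADT.c q ⊗ₜ[ℂ] ADT.b q) = 0 := by
    rw [Algebra.TensorProduct.tmul_mul_tmul, Rdc hq', TensorProduct.zero_tmul]
  rw [orth_add_pow (A := ADT q ⊗[ℂ] ADT q) hxy hyx n, Algebra.TensorProduct.tmul_pow,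
    Algebra.TensorProduct.tmul_pow, mul_add, Algebra.TensorProduct.tmul_mul_tmul,
    Algebra.TensorProduct.tmul_mul_tmul]

omit hq'

lemma E_a (m : ℤ) (n : ℕ) : Cq.ε (ADT.Dz q m * ADT.a q ^ (n+1)) = 1 := by
  rw [map_mul, map_pow, epsDz Cq, Cq.εa, one_pow, mul_one]
lemma E_d (m : ℤ) (n : ℕ) : Cq.ε (ADT.Dz q m * ADT.d q ^ (n+1)) = 1 := by
  rw [map_mul, map_pow, epsDz Cq, Cq.εd, one_pow, mul_one]
lemma E_b (m : ℤ) (n : ℕ) : Cq.ε (ADT.Dz q m * ADT.b q ^ (n+1)) = 0 := by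
  rw [map_mul, map_pow, epsDz Cq, Cq.εb, zero_pow (Nat.succ_ne_zero n), mul_zero]
lemma E_c (m : ℤ) (n : ℕ) : Cq.ε (ADT.Dz q m * ADT.c q ^ (n+1)) = 0 := by
  rw [map_mul, map_pow, epsDz Cq, Cq.εc, zero_pow (Nat.succ_ne_zero n), mul_zero]

end coalg

/-- For `m ∈ ℤ`, `n ≥ 1`, the matrix `w_{m,n}` is a 2-dimensional
unitary corepresentation of `A(DT²_q)`:
`Δ(w_{ik}) = Σ_r w_{ir} ⊗ w_{rk}`, `ε(w_{ik}) = δ_{ik}`, and `w* w = w w* = 1`. -/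
theorem statement_16 (q : ℂ) (hq : ‖q‖ = 1) (C : ADTCoalg q) (st : ADTStar q)
    (m : ℤ) (n : ℕ) (hn : 1 ≤ n) :
    -- (i) comultiplication of the entries
    (∀ i k : Fin 2, C.Δ (wmat q m n i k) = ∑ r : Fin 2, wmat q m n i r ⊗ₜ wmat q m n r k)
    -- (ii) counit of the entries
    ∧ (∀ i k : Fin 2, C.ε (wmat q m n i k) = if i = k then 1 else 0)
    -- (iii) unitarity
    ∧ (∀ i k : Fin 2,
        (∑ r : Fin 2, st.st (wmat q m n r i) * wmat q m n r k) = if i = k then 1 else 0)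
    ∧ (∀ i k : Fin 2,
        (∑ r : Fin 2, wmat q m n i r * st.st (wmat q m n k r)) = if i = k then 1 else 0) := by
  have hq' : q ≠ 0 := by
    intro h
    rw [h] at hq
    simp at hq
  obtain ⟨n, rfl⟩ : ∃ k, n = k + 1 := ⟨n - 1, by omega⟩
  refine ⟨?_, ?_, ?_, ?_⟩
  · intro i k
    fin_cases i <;> fin_cases k <;>
      simp only [wmat, Fin.sum_univ_two, Fin.isValue, Matrix.cons_val', Matrix.cons_val_zero,
        Matrix.cons_val_one, Matrix.head_cons, Matrix.empty_val', Matrix.cons_val_fin_one,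
        Matrix.head_fin_const]
    · exact D00 hq' C m n
    · exact D01 hq' C m n
    · exact D10 hq' C m n
    · exact D11 hq' C m n
  · intro i k
    fin_cases i <;> fin_cases k <;>
      simp only [wmat, Fin.isValue, Matrix.cons_val', Matrix.cons_val_zero,
        Matrix.cons_val_one, Matrix.head_cons, Matrix.empty_val', Matrix.cons_val_fin_one,
        Matrix.head_fin_const, reduceIte, Fin.zero_eta, Fin.mk_one, ne_eq,
        one_ne_zero, zero_ne_one, not_false_eq_true, if_true, if_false]
    · exact E_a C m n
    · exact E_b C m n
    · exact E_c C m n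
    · exact E_d C m n
  · intro i k
    fin_cases i <;> fin_cases k <;>
      simp only [wmat, Fin.sum_univ_two, Fin.isValue, Matrix.cons_val', Matrix.cons_val_zero,
        Matrix.cons_val_one, Matrix.head_cons, Matrix.empty_val', Matrix.cons_val_fin_one,
        Matrix.head_fin_const, reduceIte, Fin.zero_eta, Fin.mk_one, ne_eq,
        one_ne_zero, zero_ne_one, not_false_eq_true, if_true, if_false]
    · exact U_aa hq' st m n
    · exact U_offab hq' st m n
    · exact U_offba hq' st m n
    · exact U_bb hq' st m n
  · intro i k
    fin_cases i <;> fin_cases k <;>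
      simp only [wmat, Fin.sum_univ_two, Fin.isValue, Matrix.cons_val', Matrix.cons_val_zero,
        Matrix.cons_val_one, Matrix.head_cons, Matrix.empty_val', Matrix.cons_val_fin_one,
        Matrix.head_fin_const, reduceIte, Fin.zero_eta, Fin.mk_one, ne_eq,
        one_ne_zero, zero_ne_one, not_false_eq_true, if_true, if_false]
    · exact V_aa hq' st m n
    · exact V_offab hq' st m n
    · exact V_offba hq' st m n
    · exact V_bb hq' st m n

end QDT
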